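/- arXiv:2101.11993 — 4 statements merged into one kernel-verified Lean document; each statement's English description precedes it below -/
import Mathlib

section
/- Let G be an abelian group, R a graded Γ-ring of type G, and M and K graded R_Γ-modules of type G. Suppose M is finitely generated, i.e., there exist m₁, …, m_s ∈ M such that every x ∈ M can be written x = r₁γ₁m₁ + ⋯ + r_sγ_sm_s for some r_i ∈ R and γ_i ∈ Γ. Then Hom_R(M,K) is the internal direct sum ⊕_{g∈G} Hom_R(M,K)_g of its subgroups of homogeneous homomorphisms of degree g. -/
theorem pi_exists {G X : Type*} [DecidableEq G] [AddCommGroup X]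
    (B : G → AddSubgroup X) (hB : DirectSum.IsInternal B) :
    ∃ π : G → (X →+ X),
      (∀ g x, π g x ∈ B g) ∧
      (∀ g h x, x ∈ B h → π g x = if g = h then x else 0) ∧
      (∀ x : X, ∃ U : Finset G, (∀ g ∉ U, π g x = 0) ∧
        ∀ V : Finset G, U ⊆ V → ∑ g ∈ V, π g x = x) := by
  classical
  let E : X ≃+ DirectSum G (fun g => ↥(B g)) := (AddEquiv.ofBijective (DirectSum.coeAddMonoidHom B) hB).symm
  have hE : ∀ z : DirectSum G (fun g => ↥(B g)), E.symm z = DirectSum.coeAddMonoidHom B z := fun z => by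
    simp [E, AddEquiv.ofBijective]; rfl
  refine ⟨fun g => AddMonoidHom.mk' (fun x => ((E x) g : X)) (fun a b => by
      simp [map_add, DirectSum.add_apply]), fun g x => (E x g).2, ?_, ?_⟩
  · intro g h x hx
    have h1 : E x = DirectSum.of (fun g => B g) h ⟨x, hx⟩ := by
      apply E.symm.injective
      rw [AddEquiv.symm_apply_apply, hE, DirectSum.coeAddMonoidHom_of]
    show ((E x) g : X) = _
    rw [h1]
    by_cases hgh : g = h
    · subst hgh; rw [DirectSum.of_eq_same, if_pos rfl]
    · rw [DirectSum.of_eq_of_ne _ _ _ hgh, if_neg hgh]; rfl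
  · intro x
    refine ⟨(E x).support, fun g hg => ?_, fun V hV => ?_⟩
    · show ((E x) g : X) = 0
      rw [DFinsupp.notMem_support_iff.mp hg]; rfl
    · have base : ∑ g ∈ (E x).support, ((E x) g : X) = x := by
        conv_rhs => rw [← AddEquiv.symm_apply_apply E x, hE,
          ← DirectSum.sum_support_of (E x)]
        rw [map_sum]
        exact Finset.sum_congr rfl fun g _ => (DirectSum.coeAddMonoidHom_of B g _).symm
      show ∑ g ∈ V, ((E x) g : X) = x
      refine Eq.trans ?_ base
      exact (Finset.sum_subset (f := fun g => ((E x) g : X)) hV fun g _ hg => by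
        show ((E x) g : X) = 0
        rw [DFinsupp.notMem_support_iff.mp hg]; rfl).symm

theorem glue_exists {G X Y : Type*} [DecidableEq G] [AddCommGroup X] [AddCommGroup Y]
    (B : G → AddSubgroup X) (hB : DirectSum.IsInternal B) (T : G → (X →+ Y)) :
    ∃ C : X →+ Y, ∀ h x, x ∈ B h → C x = T h x := by
  classical
  let E : X ≃+ DirectSum G (fun g => ↥(B g)) :=
    (AddEquiv.ofBijective (DirectSum.coeAddMonoidHom B) hB).symm
  have hE : ∀ z : DirectSum G (fun g => ↥(B g)), E.symm z = DirectSum.coeAddMonoidHom B z :=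
    fun z => by simp [E, AddEquiv.ofBijective]; rfl
  refine ⟨(DirectSum.toAddMonoid (fun h => (T h).comp (B h).subtype)).comp E.toAddMonoidHom,
    fun h x hx => ?_⟩
  have h1 : E x = DirectSum.of (fun g => ↥(B g)) h ⟨x, hx⟩ := by
    apply E.symm.injective
    rw [AddEquiv.symm_apply_apply, hE, DirectSum.coeAddMonoidHom_of]
  show DirectSum.toAddMonoid _ (E x) = T h x
  rw [h1, DirectSum.toAddMonoid_of]
  rfl




/-- A Γ-ring (in the sense of Barnes): an additive abelian group `R` with a
triple product `R × Γ × R → R` that is additive in each argument and associative. -/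
structure GammaRing (R Γ : Type*) [AddCommGroup R] [AddCommGroup Γ] where
  tri : R → Γ → R → R
  tri_add_left : ∀ (x y : R) (γ : Γ) (z : R), tri (x + y) γ z = tri x γ z + tri y γ z
  tri_add_mid : ∀ (x : R) (γ δ : Γ) (z : R), tri x (γ + δ) z = tri x γ z + tri x δ z
  tri_add_right : ∀ (x : R) (γ : Γ) (y z : R), tri x γ (y + z) = tri x γ y + tri x γ z
  tri_assoc : ∀ (x : R) (γ : Γ) (y : R) (δ : Γ) (z : R),
    tri (tri x γ y) δ z = tri x γ (tri y δ z)

namespace GammaRing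

variable {R Γ : Type*} [AddCommGroup R] [AddCommGroup Γ]

/-- `A : G → AddSubgroup R` is a grading of the Γ-ring `S` of type `G`:
`R` is the internal direct sum of the `A g`, and `A g Γ A h ⊆ A (g*h)`. -/
def IsGrading {G : Type*} [CommSemigroup G] [DecidableEq G]
    (S : GammaRing R Γ) (A : G → AddSubgroup R) : Prop :=
  DirectSum.IsInternal A ∧
    ∀ (g h : G) (x y : R) (γ : Γ), x ∈ A g → y ∈ A h → S.tri x γ y ∈ A (g * h)

/-- `e` is a unity of the Γ-ring `S` with respect to `γ₀`. -/
def IsUnity (S : GammaRing R Γ) (e : R) (γ₀ : Γ) : Prop :=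
  ∀ a : R, S.tri a γ₀ e = a ∧ S.tri e γ₀ a = a

/-- An ascending filtration of the Γ-ring `S`. -/
def IsFiltration (S : GammaRing R Γ) (F : ℕ → AddSubgroup R) : Prop :=
  Monotone F ∧ (∀ x : R, ∃ k, x ∈ F k) ∧
    ∀ (i j : ℕ) (x y : R) (γ : Γ), x ∈ F i → y ∈ F j → S.tri x γ y ∈ F (i + j)

/-- The additive subgroup of `R` generated by all products `xγy` with `x ∈ A`, `y ∈ B`. -/
def triSpan (S : GammaRing R Γ) (A B : AddSubgroup R) : AddSubgroup R :=
  AddSubgroup.closure {z : R | ∃ x ∈ A, ∃ γ : Γ, ∃ y ∈ B, z = S.tri x γ y}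

end GammaRing

/-- The shifted filtration, with the convention `F⁻¹ = {0}`. -/
def prevF {R : Type*} [AddCommGroup R] (F : ℕ → AddSubgroup R) : ℕ → AddSubgroup R
  | 0 => ⊥
  | k + 1 => F k

/-- A (left) `R_Γ`-module over the Γ-ring `S`. -/
structure GammaModule {R Γ : Type*} [AddCommGroup R] [AddCommGroup Γ]
    (S : GammaRing R Γ) (M : Type*) [AddCommGroup M] where
  smul : R → Γ → M → M
  smul_add_left : ∀ (r r' : R) (γ : Γ) (m : M), smul (r + r') γ m = smul r γ m + smul r' γ m
  smul_add_mid : ∀ (r : R) (γ δ : Γ) (m : M), smul r (γ + δ) m = smul r γ m + smul r δ m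
  smul_add_right : ∀ (r : R) (γ : Γ) (m m' : M), smul r γ (m + m') = smul r γ m + smul r γ m'
  smul_assoc : ∀ (r₁ : R) (γ₁ : Γ) (r₂ : R) (γ₂ : Γ) (m : M),
    smul (S.tri r₁ γ₁ r₂) γ₂ m = smul r₁ γ₁ (smul r₂ γ₂ m)

namespace GammaModule

variable {R Γ : Type*} [AddCommGroup R] [AddCommGroup Γ] {S : GammaRing R Γ}
variable {M : Type*} [AddCommGroup M]

/-- The action of `(r, γ)` on `M`, as an additive homomorphism. -/
def smulHom (SM : GammaModule S M) (r : R) (γ : Γ) : M →+ M :=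
  AddMonoidHom.mk' (SM.smul r γ) (SM.smul_add_right r γ)

/-- `B : G → AddSubgroup M` is a grading of the `R_Γ`-module `M` (over the grading `A` of `R`). -/
def IsGrading {G : Type*} [CommSemigroup G] [DecidableEq G]
    (SM : GammaModule S M) (A : G → AddSubgroup R) (B : G → AddSubgroup M) : Prop :=
  DirectSum.IsInternal B ∧
    ∀ (g h : G) (r : R) (γ : Γ) (m : M), r ∈ A g → m ∈ B h → SM.smul r γ m ∈ B (g * h)

/-- An ascending filtration of the `R_Γ`-module `M` compatible with a filtration `F` of `R`. -/
def IsFiltration (SM : GammaModule S M) (F : ℕ → AddSubgroup R)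
    (FM : ℕ → AddSubgroup M) : Prop :=
  Monotone FM ∧ (∀ m : M, ∃ k, m ∈ FM k) ∧
    ∀ (i j : ℕ) (r : R) (γ : Γ) (m : M), r ∈ F i → m ∈ FM j → SM.smul r γ m ∈ FM (i + j)

end GammaModule

/-- `Hom_R(M, K)`: the additive subgroup of `M →+ K` consisting of Γ-module homomorphisms. -/
def gammaHoms {R Γ : Type*} [AddCommGroup R] [AddCommGroup Γ] {S : GammaRing R Γ}
    {M K : Type*} [AddCommGroup M] [AddCommGroup K]
    (SM : GammaModule S M) (SK : GammaModule S K) : AddSubgroup (M →+ K) where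
  carrier := {f | ∀ (r : R) (γ : Γ) (m : M), f (SM.smul r γ m) = SK.smul r γ (f m)}
  add_mem' := by
    intro f g hf hg r γ m
    simp only [AddMonoidHom.add_apply, hf r γ m, hg r γ m, SK.smul_add_right]
  zero_mem' := by
    intro r γ m
    simp only [AddMonoidHom.zero_apply]
    exact (map_zero (SK.smulHom r γ)).symm
  neg_mem' := by
    intro f hf r γ m
    simp only [AddMonoidHom.neg_apply, hf r γ m]
    exact (map_neg (SK.smulHom r γ) (f m)).symm

/-- `Hom_R(M, K)_g`: Γ-module homomorphisms that are homogeneous of degree `g`. -/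
def gammaHomsOfDeg {R Γ : Type*} [AddCommGroup R] [AddCommGroup Γ] {S : GammaRing R Γ}
    {M K : Type*} [AddCommGroup M] [AddCommGroup K] {G : Type*} [CommSemigroup G]
    (SM : GammaModule S M) (SK : GammaModule S K)
    (BM : G → AddSubgroup M) (BK : G → AddSubgroup K) (g : G) : AddSubgroup (M →+ K) where
  carrier := {f | f ∈ gammaHoms SM SK ∧ ∀ (h : G), ∀ m ∈ BM h, f m ∈ BK (g * h)}
  add_mem' := by
    rintro f f' ⟨hf1, hf2⟩ ⟨hf'1, hf'2⟩
    refine ⟨add_mem hf1 hf'1, fun h m hm => ?_⟩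
    simpa using add_mem (hf2 h m hm) (hf'2 h m hm)
  zero_mem' := by
    refine ⟨zero_mem _, fun h m hm => ?_⟩
    simpa using zero_mem (BK (g * h))
  neg_mem' := by
    rintro f ⟨hf1, hf2⟩
    refine ⟨neg_mem hf1, fun h m hm => ?_⟩
    simpa using neg_mem (hf2 h m hm)

section SmulLemmas

variable {R Γ M : Type*} [AddCommGroup R] [AddCommGroup Γ] [AddCommGroup M]
  {S : GammaRing R Γ} (SM : GammaModule S M)

theorem gsmul_zero_right (r : R) (γ : Γ) : SM.smul r γ (0 : M) = 0 :=
  map_zero (SM.smulHom r γ)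

theorem gsmul_zero_left (γ : Γ) (m : M) : SM.smul 0 γ m = 0 := by
  have h := SM.smul_add_left 0 0 γ m
  rw [add_zero] at h
  exact left_eq_add.mp h

theorem gsmul_sum_left {ι : Type*} (U : Finset ι) (c : ι → R) (γ : Γ) (m : M) :
    SM.smul (∑ i ∈ U, c i) γ m = ∑ i ∈ U, SM.smul (c i) γ m :=
  map_sum (AddMonoidHom.mk' (fun r => SM.smul r γ m) (fun a b => SM.smul_add_left a b γ m)) c U

theorem gsmul_sum_right {ι : Type*} (U : Finset ι) (r : R) (γ : Γ) (c : ι → M) :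
    SM.smul r γ (∑ i ∈ U, c i) = ∑ i ∈ U, SM.smul r γ (c i) :=
  map_sum (SM.smulHom r γ) c U

end SmulLemmas

set_option maxHeartbeats 1000000
set_option synthInstance.maxHeartbeats 400000

/-- if `M` is a finitely generated graded Γ-module, then
`Hom_R(M, K)` is the internal direct sum of its subgroups of homogeneous
homomorphisms of degree `g`, `g ∈ G`. -/
theorem homs_internal_direct_sum {R Γ G M K : Type*} [AddCommGroup R] [AddCommGroup Γ]
    [CommGroup G] [DecidableEq G] [AddCommGroup M] [AddCommGroup K]
    (S : GammaRing R Γ) (A : G → AddSubgroup R) (hA : S.IsGrading A)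
    (SM : GammaModule S M) (SK : GammaModule S K)
    (BM : G → AddSubgroup M) (BK : G → AddSubgroup K)
    (hBM : SM.IsGrading A BM) (hBK : SK.IsGrading A BK)
    (hfg : ∃ (n : ℕ) (m : Fin n → M), ∀ x : M, ∃ (r : Fin n → R) (γ : Fin n → Γ),
      x = ∑ i, SM.smul (r i) (γ i) (m i)) :
    DirectSum.IsInternal
      (fun g : G => (gammaHomsOfDeg SM SK BM BK g).addSubgroupOf (gammaHoms SM SK)) := by
    classical
  obtain ⟨n, mg, hgen⟩ := hfg
  obtain ⟨πR, hπR_mem, hπR_if, hπR_sum⟩ := pi_exists A hA.1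
  obtain ⟨πM, hπM_mem, hπM_if, hπM_sum⟩ := pi_exists BM hBM.1
  obtain ⟨πK, hπK_mem, hπK_if, hπK_sum⟩ := pi_exists BK hBK.1
  set Homs := gammaHoms SM SK with hHoms
  set D : G → AddSubgroup ↥Homs :=
    fun g : G => (gammaHomsOfDeg SM SK BM BK g).addSubgroupOf Homs with hD
  -- a convenient variant of the sum property for `πK`
  have hKsum' : ∀ (k : K) (V : Finset G), (∀ x ∉ V, πK x k = 0) → ∑ x ∈ V, πK x k = k := by
    intro k V hV
    obtain ⟨U, hU0, hUs⟩ := hπK_sum k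
    rw [Finset.sum_subset (Finset.subset_union_left (s₂ := U)) (fun x _ hx2 => hV x hx2)]
    exact hUs _ Finset.subset_union_right
  -- independence in K
  have hindep : ∀ (U : Finset G) (c : G → K) (σ : G → G), Set.InjOn σ U →
      (∀ g ∈ U, c g ∈ BK (σ g)) → ∑ g ∈ U, c g = 0 → ∀ g ∈ U, c g = 0 := by
    intro U c σ hinj hc h0 g₀ hg₀
    have h1 := congrArg (πK (σ g₀)) h0
    rw [map_zero, map_sum] at h1
    rw [Finset.sum_congr rfl (fun g hg => hπK_if (σ g₀) (σ g) (c g) (hc g hg))] at h1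
    rw [Finset.sum_eq_single_of_mem g₀ hg₀
      (fun b hb hne => if_neg (fun he => hne (hinj hb hg₀ he.symm)))] at h1
    rwa [if_pos rfl] at h1
  -- decomposition of any element of M into homogeneous pieces
  have hdecM : ∀ m : M, ∃ U : Finset G, (∀ h ∉ U, πM h m = 0) ∧
      ∀ V : Finset G, U ⊆ V → ∑ h ∈ V, πM h m = m := hπM_sum
  constructor
  · -- injectivity
    rw [injective_iff_map_eq_zero]
    intro z hz
    have h2 : ∑ g ∈ z.support, ((z g : ↥Homs)) = (0 : ↥Homs) := by
      rw [← hz]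
      conv_rhs => rw [← DirectSum.sum_support_of z]
      rw [map_sum]
      exact Finset.sum_congr rfl fun g _ => (DirectSum.coeAddMonoidHom_of D g (z g)).symm
    have h1 : ∑ g ∈ z.support, (((z g : ↥Homs) : M →+ K)) = 0 := by
      have h3 := congrArg Homs.subtype h2
      rw [map_sum, map_zero] at h3
      exact h3
    have hcomp_zero : ∀ g ∈ z.support, ((z g : ↥Homs) : M →+ K) = 0 := by
      intro g hg
      have hhom : ∀ (h : G) (m : M), m ∈ BM h → ((z g : ↥Homs) : M →+ K) m = 0 := by
        intro h m hm
        have h4 := congrArg (fun (φ : M →+ K) => φ m) h1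
        simp only [AddMonoidHom.finset_sum_apply, AddMonoidHom.zero_apply] at h4
        refine hindep z.support (fun g' => ((z g' : ↥Homs) : M →+ K) m) (fun g' => g' * h)
          ((mul_left_injective h).injOn) (fun g' _ => ?_) h4 g hg
        have hmem := AddSubgroup.mem_addSubgroupOf.mp (z g').2
        exact hmem.2 h m hm
      ext m
      obtain ⟨U, hU0, hUs⟩ := hdecM m
      rw [show m = ∑ h ∈ U, πM h m from (hUs U subset_rfl).symm, map_sum]
      rw [AddMonoidHom.zero_apply]
      exact Finset.sum_eq_zero fun h _ => hhom h (πM h m) (hπM_mem h m)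
    refine DFinsupp.ext fun g => ?_
    by_cases hg : g ∈ z.support
    · exact Subtype.ext (Subtype.ext (hcomp_zero g hg))
    · exact DFinsupp.notMem_support_iff.mp hg
  · -- surjectivity
    rintro ⟨f, hf⟩
    have hf' : ∀ (r : R) (γ : Γ) (m : M), f (SM.smul r γ m) = SK.smul r γ (f m) := hf
    choose comp hcomp using fun g : G =>
      glue_exists BM hBM.1 (fun h => (πK (g * h)).comp f)
    have hcomp' : ∀ (g h : G) (m : M), m ∈ BM h → comp g m = πK (g * h) (f m) := by
      intro g h m hm; exact hcomp g h m hm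
    have hc_homog : ∀ (g h : G) (m : M), m ∈ BM h → comp g m ∈ BK (g * h) := by
      intro g h m hm
      rw [hcomp' g h m hm]
      exact hπK_mem _ _
    -- the commuting lemma
    have hcommute : ∀ (a : G) (r : R), r ∈ A a → ∀ (γ : Γ) (u : G) (k : K),
        πK (a * u) (SK.smul r γ k) = SK.smul r γ (πK u k) := by
      intro a r hr γ u k
      obtain ⟨Uk, hUk0, hUks⟩ := hπK_sum k
      conv_lhs => rw [show k = ∑ x ∈ Uk, πK x k from (hUks Uk subset_rfl).symm]
      conv_rhs => rw [show k = ∑ x ∈ Uk, πK x k from (hUks Uk subset_rfl).symm]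
      rw [gsmul_sum_right, map_sum, map_sum, gsmul_sum_right]
      refine Finset.sum_congr rfl fun x _ => ?_
      have h5 : SK.smul r γ (πK x k) ∈ BK (a * x) := hBK.2 a x r γ (πK x k) hr (hπK_mem x k)
      rw [hπK_if (a * u) (a * x) _ h5, hπK_if u x _ (hπK_mem x k)]
      by_cases hux : u = x
      · subst hux; rw [if_pos rfl, if_pos rfl]
      · rw [if_neg (fun he => hux (mul_left_cancel he)), if_neg hux, gsmul_zero_right]
    -- each component is a Γ-module homomorphism
    have hc_hom : ∀ (g : G) (r : R) (γ : Γ) (m : M),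
        comp g (SM.smul r γ m) = SK.smul r γ (comp g m) := by
      intro g r γ m
      obtain ⟨Ur, hUr0, hUrs⟩ := hπR_sum r
      conv_lhs => rw [show r = ∑ a ∈ Ur, πR a r from (hUrs Ur subset_rfl).symm]
      conv_rhs => rw [show r = ∑ a ∈ Ur, πR a r from (hUrs Ur subset_rfl).symm]
      rw [gsmul_sum_left, map_sum, gsmul_sum_left]
      refine Finset.sum_congr rfl fun a _ => ?_
      obtain ⟨Um, hUm0, hUms⟩ := hdecM m
      conv_lhs => rw [show m = ∑ h ∈ Um, πM h m from (hUms Um subset_rfl).symm]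
      conv_rhs => rw [show m = ∑ h ∈ Um, πM h m from (hUms Um subset_rfl).symm]
      rw [gsmul_sum_right, map_sum, map_sum, gsmul_sum_right]
      refine Finset.sum_congr rfl fun h _ => ?_
      have hra : πR a r ∈ A a := hπR_mem a r
      have hmh : πM h m ∈ BM h := hπM_mem h m
      have hsm : SM.smul (πR a r) γ (πM h m) ∈ BM (a * h) := hBM.2 a h _ γ _ hra hmh
      rw [hcomp' g (a * h) _ hsm, hf', hcomp' g h _ hmh,
        show g * (a * h) = a * (g * h) by rw [mul_left_comm],
        hcommute a (πR a r) hra γ (g * h) (f (πM h m))]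
    have hc_mem : ∀ g : G, comp g ∈ gammaHoms SM SK := fun g => hc_hom g
    -- the finite support of the decomposition of f
    choose UM hUM0 hUMs using fun i : Fin n => hπM_sum (mg i)
    choose W hW0 hWs using fun (i : Fin n) (h : G) => hπK_sum (f (πM h (mg i)))
    set T : Finset G := Finset.univ.biUnion
      (fun i => (UM i).biUnion fun h => (W i h).image (fun x => x * h⁻¹)) with hT
    have claimA : ∀ g ∉ T, ∀ m : M, comp g m = 0 := by
      intro g hg
      have hgen_zero : ∀ i, comp g (mg i) = 0 := by
        intro i
        have e1 : comp g (mg i) = ∑ h ∈ UM i, πK (g * h) (f (πM h (mg i))) := by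
          conv_lhs => rw [show mg i = ∑ h ∈ UM i, πM h (mg i) from
            (hUMs i (UM i) subset_rfl).symm]
          rw [map_sum]
          exact Finset.sum_congr rfl fun h _ => hcomp' g h _ (hπM_mem h (mg i))
        rw [e1]
        refine Finset.sum_eq_zero fun h hh => ?_
        by_contra hne
        have hmemW : g * h ∈ W i h := by
          by_contra h2; exact hne (hW0 i h _ h2)
        exact hg (Finset.mem_biUnion.mpr ⟨i, Finset.mem_univ i, Finset.mem_biUnion.mpr
          ⟨h, hh, Finset.mem_image.mpr ⟨g * h, hmemW, by group⟩⟩⟩)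
      intro m
      obtain ⟨r, γs, hm⟩ := hgen m
      rw [hm, map_sum]
      refine Finset.sum_eq_zero fun i _ => ?_
      rw [hc_hom g (r i) (γs i) (mg i), hgen_zero i, gsmul_zero_right]
    have claimB : ∀ m : M, ∑ g ∈ T, comp g m = f m := by
      intro m
      obtain ⟨Um, hUm0, hUms⟩ := hdecM m
      have e1 : ∀ g : G, comp g m = ∑ h ∈ Um, πK (g * h) (f (πM h m)) := by
        intro g
        conv_lhs => rw [show m = ∑ h ∈ Um, πM h m from (hUms Um subset_rfl).symm]
        rw [map_sum]
        exact Finset.sum_congr rfl fun h _ => hcomp' g h _ (hπM_mem h m)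
      rw [Finset.sum_congr rfl fun g _ => e1 g, Finset.sum_comm]
      have e2 : ∀ h ∈ Um, ∑ g ∈ T, πK (g * h) (f (πM h m)) = f (πM h m) := by
        intro h hh
        have hz : ∀ x ∉ T.image (fun g => g * h), πK x (f (πM h m)) = 0 := by
          intro x hx
          by_contra hne
          have hgT : x * h⁻¹ ∉ T := by
            intro hmem
            exact hx (Finset.mem_image.mpr ⟨x * h⁻¹, hmem, by group⟩)
          have hz2 : ∑ h' ∈ Um, πK ((x * h⁻¹) * h') (f (πM h' m)) = 0 := by
            rw [← e1 (x * h⁻¹)]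
            exact claimA _ hgT m
          have := hindep Um (fun h' => πK ((x * h⁻¹) * h') (f (πM h' m)))
            (fun h' => (x * h⁻¹) * h') ((mul_right_injective (x * h⁻¹)).injOn)
            (fun h' _ => hπK_mem _ _) hz2 h hh
          exact hne (by simpa [inv_mul_cancel_right] using this)
        have e3 := hKsum' (f (πM h m)) (T.image (fun g => g * h)) hz
        rw [Finset.sum_image (fun a _ b _ hab => mul_left_injective h hab)] at e3
        exact e3
      rw [Finset.sum_congr rfl e2, ← map_sum, hUms Um subset_rfl]
    have hel : ∀ g : G, (⟨comp g, hc_mem g⟩ : ↥Homs) ∈ D g := fun g =>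
      AddSubgroup.mem_addSubgroupOf.mpr ⟨hc_mem g, fun h m hm => hc_homog g h m hm⟩
    refine ⟨∑ g ∈ T, DirectSum.of (fun g => ↥(D g)) g
      (⟨⟨comp g, hc_mem g⟩, hel g⟩ : ↥(D g)), ?_⟩
    rw [map_sum]
    simp only [DirectSum.coeAddMonoidHom_of]
    refine Subtype.ext ?_
    have : ((∑ g ∈ T, (⟨⟨comp g, hc_mem g⟩, hel g⟩ : ↥(D g)) : ↥Homs) : M →+ K)
        = ∑ g ∈ T, comp g := by
      push_cast
      rfl
    refine AddMonoidHom.ext fun m => ?_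
    rw [show (((∑ g ∈ T, (⟨comp g, hc_mem g⟩ : ↥Homs)) : ↥Homs) : M →+ K)
        = ∑ g ∈ T, comp g from by push_cast; rfl]
    rw [AddMonoidHom.finset_sum_apply]
    exact claimB m
end

section
/- Let G be an abelian group with identity e and let R be a graded Γ-ring of type G with grading (R_g)_{g∈G} possessing a unity 1 with respect to γ₀ ∈ Γ. Then R is strongly graded if and only if for every g ∈ G the element 1 belongs to the additive subgroup of R generated by {xγy : x ∈ R_g, γ ∈ Γ, y ∈ R_{g⁻¹}}. -/
section Aux

variable {R Γ G : Type*} [AddCommGroup R] [AddCommGroup Γ] [CommGroup G] [DecidableEq G]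

/-- The unity of a graded Γ-ring lies in the identity component. -/
lemma GammaRing.unity_mem_one (S : GammaRing R Γ) (A : G → AddSubgroup R)
    (hA : S.IsGrading A) (e : R) (γ₀ : Γ) (he : S.IsUnity e γ₀) : e ∈ A 1 := by
  classical
  obtain ⟨⟨hinj, hsurj⟩, hmul⟩ := hA
  obtain ⟨d, hd⟩ := hsurj e
  set e1 : R := ((d 1 : A 1) : R) with he1
  have decomp_unique : ∀ (k : G) (a : R) (ha : a ∈ A k) (d' : DirectSum G fun g => A g),
      DirectSum.coeAddMonoidHom A d' = a →
        d' = DirectSum.of (fun g => (A g : AddSubgroup R)) k ⟨a, ha⟩ := by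
    intro k a ha d' h
    apply hinj
    rw [h, DirectSum.coeAddMonoidHom_of]
  have key : ∀ (k : G) (a : R), a ∈ A k → S.tri a γ₀ e1 = a := by
    intro k a ha
    set triHom : R →+ R := AddMonoidHom.mk' (fun z => S.tri a γ₀ z) (S.tri_add_right a γ₀)
      with htriHom
    -- the reindexing hom
    set F : (DirectSum G fun g => A g) →+ (DirectSum G fun g => A g) :=
      DirectSum.toAddMonoid (fun h =>
        (DirectSum.of (fun g => (A g : AddSubgroup R)) (k * h)).comp
          (AddMonoidHom.mk' (fun x : A h => (⟨S.tri a γ₀ x, hmul k h a x γ₀ ha x.2⟩ : A (k * h)))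
            (fun x y => by ext; simp [S.tri_add_right]))) with hF
    have hFof : ∀ (h : G) (x : A h),
        F (DirectSum.of (fun g => (A g : AddSubgroup R)) h x)
          = DirectSum.of (fun g => (A g : AddSubgroup R)) (k * h)
              ⟨S.tri a γ₀ x, hmul k h a x γ₀ ha x.2⟩ := by
      intro h x
      rw [hF, DirectSum.toAddMonoid_of]
      rfl
    have hcoeF : ∀ d' : DirectSum G fun g => A g,
        DirectSum.coeAddMonoidHom A (F d') = S.tri a γ₀ (DirectSum.coeAddMonoidHom A d') := by
      intro d'
      refine DirectSum.induction_on d' ?_ ?_ ?_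
      · simp only [map_zero]
        exact (map_zero triHom).symm
      · intro h x
        rw [hFof, DirectSum.coeAddMonoidHom_of, DirectSum.coeAddMonoidHom_of]
      · intro x y hx hy
        rw [map_add, map_add, map_add, hx, hy, S.tri_add_right]
    have hFd : F d = DirectSum.of (fun g => (A g : AddSubgroup R)) k ⟨a, ha⟩ := by
      apply decomp_unique
      rw [hcoeF, hd, (he a).1]
    have hcomp : ∀ d' : DirectSum G fun g => A g,
        ((F d') k : R) = S.tri a γ₀ ((d' 1 : A 1) : R) := by
      intro d'
      refine DirectSum.induction_on d' ?_ ?_ ?_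
      · rw [map_zero]
        show ((0 : DirectSum G fun g => A g) k : R) = S.tri a γ₀ ((0 : DirectSum G fun g => A g) 1 : R)
        rw [DirectSum.zero_apply, DirectSum.zero_apply, ZeroMemClass.coe_zero,
          ZeroMemClass.coe_zero]
        exact (map_zero triHom).symm
      · intro h x
        rw [hFof]
        rw [DirectSum.coe_of_apply, DirectSum.coe_of_apply]
        by_cases hh : h = 1
        · subst hh
          rw [if_pos (mul_one k), if_pos rfl]
        · rw [if_neg hh, if_neg (fun hc : k * h = k => hh (by
            have : k * h = k * 1 := by rw [mul_one]; exact hc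
            exact mul_left_cancel this))]
          exact (map_zero triHom).symm
      · intro x y hx hy
        rw [map_add]
        show (((F x) + (F y)) k : R) = S.tri a γ₀ (((x + y) 1 : A 1) : R)
        rw [DirectSum.add_apply, DirectSum.add_apply, AddSubgroup.coe_add, AddSubgroup.coe_add,
          hx, hy, S.tri_add_right]
    have h1 := hcomp d
    rw [hFd, DirectSum.of_eq_same] at h1
    exact h1.symm
  -- extend to all of R
  have all : ∀ a : R, S.tri a γ₀ e1 = a := by
    intro a
    obtain ⟨da, hda⟩ := hsurj a
    rw [← hda]
    refine DirectSum.induction_on da ?_ ?_ ?_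
    · rw [map_zero]
      exact map_zero (AddMonoidHom.mk' (fun z => S.tri z γ₀ e1)
        (fun x y => S.tri_add_left x y γ₀ e1))
    · intro h x
      rw [DirectSum.coeAddMonoidHom_of]
      exact key h x x.2
    · intro x y hx hy
      rw [map_add, S.tri_add_left, hx, hy]
  have heq : e = e1 := by rw [← all e, (he e1).2]
  rw [heq]
  exact (d 1).2

end Aux

/-- a graded Γ-ring of type a group `G` with unity `e` is strongly
graded iff `e ∈ R_g Γ R_{g⁻¹}` (the subgroup generated by such products) for all `g`. -/
theorem strongly_graded_iff_unity_mem {R Γ G : Type*} [AddCommGroup R] [AddCommGroup Γ]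
    [CommGroup G] [DecidableEq G]
    (S : GammaRing R Γ) (A : G → AddSubgroup R) (hA : S.IsGrading A)
    (e : R) (γ₀ : Γ) (he : S.IsUnity e γ₀) :
    (∀ g h : G, S.triSpan (A g) (A h) = A (g * h)) ↔
      (∀ g : G, e ∈ S.triSpan (A g) (A g⁻¹)) := by
  obtain ⟨hint, hmul⟩ := hA
  have hone : e ∈ A 1 := GammaRing.unity_mem_one S A ⟨hint, hmul⟩ e γ₀ he
  constructor
  · intro H g
    rw [H g g⁻¹]
    rw [mul_inv_cancel]
    exact hone
  · intro H g h
    apply le_antisymm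
    · apply AddSubgroup.closure_le _ |>.mpr
      rintro z ⟨x, hx, γ, y, hy, rfl⟩
      exact hmul g h x y γ hx hy
    · intro a ha
      have : a = S.tri e γ₀ a := ((he a).2).symm
      rw [this]
      set φ : R →+ R := AddMonoidHom.mk' (fun z => S.tri z γ₀ a)
        (fun x y => S.tri_add_left x y γ₀ a) with hφ
      have hcl : S.triSpan (A g) (A g⁻¹) ≤ (S.triSpan (A g) (A h)).comap φ := by
        apply AddSubgroup.closure_le _ |>.mpr
        rintro z ⟨x, hx, γ, y, hy, rfl⟩
        simp only [SetLike.mem_coe, AddSubgroup.mem_comap]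
        show S.tri (S.tri x γ y) γ₀ a ∈ S.triSpan (A g) (A h)
        rw [S.tri_assoc]
        apply AddSubgroup.subset_closure
        refine ⟨x, hx, γ, S.tri y γ₀ a, ?_, rfl⟩
        have := hmul g⁻¹ (g * h) y a γ₀ hy ha
        rwa [inv_mul_cancel_left] at this
      have := hcl (H g)
      simpa [hφ] using this
end

section
/- Let G be an abelian group and let R be a graded Γ-ring of type G with grading (R_g)_{g∈G} possessing a unity 1 with respect to γ₀ ∈ Γ. Suppose R is a crossed product, i.e., for every g ∈ G there exist r ∈ R_g and s ∈ R with rγ₀s = sγ₀r = 1. Then R is strongly graded. -/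
/-- a crossed product (every degree contains an invertible element)
graded Γ-ring is strongly graded. -/
theorem crossed_product_is_strongly_graded {R Γ G : Type*} [AddCommGroup R]
    [AddCommGroup Γ] [CommGroup G] [DecidableEq G]
    (S : GammaRing R Γ) (A : G → AddSubgroup R) (hA : S.IsGrading A)
    (e : R) (γ₀ : Γ) (he : S.IsUnity e γ₀)
    (hcross : ∀ g : G, ∃ r ∈ A g, ∃ s : R, S.tri r γ₀ s = e ∧ S.tri s γ₀ r = e) :
    ∀ g h : G, S.triSpan (A g) (A h) = A (g * h) := by
  intro g h
  refine le_antisymm ((AddSubgroup.closure_le _).mpr ?_) ?_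
  · rintro z ⟨x, hx, γ, y, hy, rfl⟩
    exact hA.2 g h x y γ hx hy
  · intro a ha
    obtain ⟨r, hr, s, hrs, hsr⟩ := hcross g
    have key : S.tri r γ₀ (S.tri s γ₀ a) = a := by
      rw [← S.tri_assoc, hrs]; exact (he a).2
    obtain ⟨f, hf⟩ := hA.1.2 (S.tri s γ₀ a)
    let T : R →+ R := AddMonoidHom.mk' (fun x => S.tri r γ₀ x) (S.tri_add_right r γ₀)
    let hom : ∀ k : G, A k →+ A (g * k) := fun k =>
      AddMonoidHom.mk' (fun x => ⟨S.tri r γ₀ (x : R), hA.2 g k r (x : R) γ₀ hr x.2⟩)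
        (fun x y => by ext; exact S.tri_add_right r γ₀ x y)
    let Φ : (DirectSum G fun k => (A k : Type _)) →+ DirectSum G fun k => (A k : Type _) :=
      DirectSum.toAddMonoid (fun k =>
        (DirectSum.of (fun j => (A j : Type _)) (g * k)).comp (hom k))
    have hΦ : (DirectSum.coeAddMonoidHom A).comp Φ
        = T.comp (DirectSum.coeAddMonoidHom A) := by
      refine DirectSum.addHom_ext fun k x => ?_
      simp only [AddMonoidHom.comp_apply, Φ, DirectSum.toAddMonoid_of,
        DirectSum.coeAddMonoidHom_of, hom, AddMonoidHom.mk'_apply, T]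
    have hcoe : DirectSum.coeAddMonoidHom A (Φ f) = a := by
      have := DFunLike.congr_fun hΦ f
      simp only [AddMonoidHom.comp_apply] at this
      rw [this, hf]
      exact key
    have h1 : Φ f = DirectSum.of (fun j => (A j : Type _)) (g * h) ⟨a, ha⟩ := by
      apply hA.1.1
      rw [hcoe, DirectSum.coeAddMonoidHom_of]
    have heval : ∀ x : DirectSum G fun k => (A k : Type _), (Φ x) (g * h) = hom h (x h) := by
      intro x
      induction x using DirectSum.induction_on with
      | zero => simp
      | of k y =>
        by_cases hk : k = h
        · subst hk
          simp [Φ, DirectSum.toAddMonoid_of]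
        · have hgk : g * k ≠ g * h := fun hc => hk (mul_left_cancel hc)
          simp only [Φ, DirectSum.toAddMonoid_of, AddMonoidHom.comp_apply]
          rw [DirectSum.of_eq_of_ne _ _ _ hgk.symm, DirectSum.of_eq_of_ne _ _ _ (Ne.symm hk)]
          simp
      | add x y hx hy =>
        simp only [map_add, DirectSum.add_apply, hx, hy]
    have h2 : (hom h (f h) : R) = a := by
      rw [← heval f, h1, DirectSum.of_eq_same]
    refine AddSubgroup.subset_closure ⟨r, hr, γ₀, (f h : R), (f h).2, ?_⟩
    exact h2.symm
end

section
/- Let G be an abelian group and let M and N be graded Γ-rings of type G with gradings (M_g)_{g∈G} and (N_g)_{g∈G}, where M has unity 1_M with respect to γ₀ ∈ Γ and N has unity 1_N with respect to the same γ₀. Suppose φ : M → N satisfies φ(x+y) = φ(x) + φ(y) and φ(xγy) = φ(x)γφ(y) for all x, y ∈ M and γ ∈ Γ, φ is degree preserving (φ(M_g) ⊆ N_g for all g ∈ G), and φ(1_M) = 1_N. If M is strongly graded, then N is strongly graded. -/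
lemma unity_mem_one {M Γ G : Type*} [AddCommGroup M] [AddCommGroup Γ]
    [CommGroup G] [DecidableEq G]
    (SM : GammaRing M Γ) (A : G → AddSubgroup M) (hA : SM.IsGrading A)
    (eM : M) (γ₀ : Γ) (heM : SM.IsUnity eM γ₀) : eM ∈ A (1 : G) := by
  classical
  obtain ⟨D, hD⟩ := hA.1.2 eM
  -- eM is the sum of its components
  have hDsum : ∑ k ∈ D.support, ((D k : M)) = eM := by
    conv_rhs => rw [← hD]
    conv_rhs => rw [← DirectSum.sum_support_of D]
    rw [map_sum]
    simp [DirectSum.coeAddMonoidHom_of]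
  -- right multiplication by D 1 fixes homogeneous elements
  have key : ∀ (h : G) (a : M), a ∈ A h → SM.tri a γ₀ ((D 1 : M)) = a := by
    intro h a ha
    set f : M →+ M := AddMonoidHom.mk' (fun m => SM.tri a γ₀ m) (SM.tri_add_right a γ₀) with hf
    have hfa : f eM = a := (heM a).1
    have hsum : f eM = ∑ k ∈ D.support, f ((D k : M)) := by
      rw [← hDsum, map_sum]
    have hsplit : ∑ k ∈ D.support, f ((D k : M))
        = f ((D 1 : M)) + ∑ k ∈ D.support.erase 1, f ((D k : M)) := by
      by_cases h1 : (1 : G) ∈ D.support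
      · exact (Finset.add_sum_erase _ _ h1).symm
      · rw [Finset.erase_eq_of_notMem h1, DFinsupp.notMem_support_iff.mp h1]
        have hz0 : f (((0 : A 1) : M)) = 0 := by
          rw [ZeroMemClass.coe_zero]; exact map_zero f
        rw [hz0, zero_add]
    have hmem1 : f ((D 1 : M)) ∈ A h := by
      have := hA.2 h 1 a (D 1 : M) γ₀ ha (D 1).2
      rw [mul_one] at this; exact this
    set E : DirectSum G (fun i => A i) :=
      DirectSum.of (fun i => A i) h ⟨f ((D 1 : M)), hmem1⟩
      + ∑ k ∈ D.support.erase 1, DirectSum.of (fun i => A i) (h * k)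
          ⟨f ((D k : M)), hA.2 h k a (D k : M) γ₀ ha (D k).2⟩ with hE
    have hcoeE : DirectSum.coeAddMonoidHom A E = a := by
      rw [hE, map_add, map_sum]
      simp only [DirectSum.coeAddMonoidHom_of]
      rw [← hsplit, ← hsum, hfa]
    have hcoea : DirectSum.coeAddMonoidHom A (DirectSum.of (fun i => A i) h ⟨a, ha⟩) = a := by
      simp [DirectSum.coeAddMonoidHom_of]
    have hEa : E = DirectSum.of (fun i => A i) h ⟨a, ha⟩ :=
      hA.1.1 (hcoeE.trans hcoea.symm)
    have hEh : E h = ⟨a, ha⟩ := by rw [hEa, DirectSum.of_eq_same]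
    have hEh2 : E h = ⟨f ((D 1 : M)), hmem1⟩ := by
      rw [hE]
      rw [DirectSum.add_apply, DirectSum.of_eq_same, DFinsupp.finset_sum_apply]
      rw [Finset.sum_eq_zero, add_zero]
      intro k hk
      have hne : h * k ≠ h := by
        intro hcon
        exact (Finset.mem_erase.mp hk).1
          (mul_left_cancel (a := h) (by rw [hcon, mul_one]))
      exact DirectSum.of_eq_of_ne _ _ _ hne.symm
    have hval : f ((D 1 : M)) = a := by
      have := hEh2.symm.trans hEh
      exact congrArg Subtype.val this
    exact hval
  -- extend to all of M
  have all : ∀ a : M, SM.tri a γ₀ ((D 1 : M)) = a := by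
    intro a
    obtain ⟨Da, hDa⟩ := hA.1.2 a
    have hDasum : ∑ k ∈ Da.support, ((Da k : M)) = a := by
      conv_rhs => rw [← hDa]
      conv_rhs => rw [← DirectSum.sum_support_of Da]
      rw [map_sum]
      simp [DirectSum.coeAddMonoidHom_of]
    set fr : M →+ M := AddMonoidHom.mk'
      (fun m => SM.tri m γ₀ ((D 1 : M)))
      (fun x y => SM.tri_add_left x y γ₀ ((D 1 : M))) with hfr
    have : fr a = a := by
      conv_lhs => rw [← hDasum]
      rw [map_sum]
      conv_rhs => rw [← hDasum]
      exact Finset.sum_congr rfl fun k _ => key k (Da k : M) (Da k).2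
    exact this
  have h1 : SM.tri eM γ₀ ((D 1 : M)) = eM := all eM
  have h2 : SM.tri eM γ₀ ((D 1 : M)) = (D 1 : M) := (heM ((D 1 : M))).2
  have : eM = ((D 1 : M)) := h1.symm.trans h2
  rw [this]
  exact (D 1).2

/-- the image condition: if `φ : M → N` is a degree-preserving,
unity-preserving homomorphism of graded Γ-rings and `M` is strongly graded, then
`N` is strongly graded. -/
theorem strongly_graded_of_degree_preserving_hom {M N Γ G : Type*} [AddCommGroup M]
    [AddCommGroup N] [AddCommGroup Γ] [CommGroup G] [DecidableEq G]
    (SM : GammaRing M Γ) (SN : GammaRing N Γ)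
    (A : G → AddSubgroup M) (B : G → AddSubgroup N)
    (hA : SM.IsGrading A) (hB : SN.IsGrading B)
    (eM : M) (eN : N) (γ₀ : Γ) (heM : SM.IsUnity eM γ₀) (heN : SN.IsUnity eN γ₀)
    (φ : M →+ N) (hmul : ∀ (x : M) (γ : Γ) (y : M), φ (SM.tri x γ y) = SN.tri (φ x) γ (φ y))
    (hdeg : ∀ g : G, ∀ x ∈ A g, φ x ∈ B g) (hone : φ eM = eN)
    (hstrong : ∀ g h : G, SM.triSpan (A g) (A h) = A (g * h)) :
    ∀ g h : G, SN.triSpan (B g) (B h) = B (g * h) := by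
  intro g h
  refine le_antisymm ?_ ?_
  · refine (AddSubgroup.closure_le _).2 ?_
    rintro z ⟨x, hx, γ, y, hy, rfl⟩
    exact hB.2 g h x y γ hx hy
  · intro n hn
    have heM1 : eM ∈ A (1 : G) := unity_mem_one SM A hA eM γ₀ heM
    have h1 : eM ∈ SM.triSpan (A g) (A g⁻¹) := by
      rw [hstrong g g⁻¹, mul_inv_cancel]
      exact heM1
    have h2 : eN ∈ SN.triSpan (B g) (B g⁻¹) := by
      have hle : SM.triSpan (A g) (A g⁻¹) ≤
          (SN.triSpan (B g) (B g⁻¹)).comap φ := by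
        refine (AddSubgroup.closure_le _).2 ?_
        rintro z ⟨x, hx, γ, y, hy, rfl⟩
        refine AddSubgroup.subset_closure ?_
        exact ⟨φ x, hdeg _ x hx, γ, φ y, hdeg _ y hy, (hmul x γ y).symm ▸ rfl⟩
      rw [← hone]
      exact hle h1
    set f : N →+ N := AddMonoidHom.mk' (fun m => SN.tri m γ₀ n)
      (fun a b => SN.tri_add_left a b γ₀ n) with hf
    have hle2 : SN.triSpan (B g) (B g⁻¹) ≤ (SN.triSpan (B g) (B h)).comap f := by
      refine (AddSubgroup.closure_le _).2 ?_
      rintro z ⟨x, hx, γ, y, hy, rfl⟩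
      refine AddSubgroup.subset_closure ?_
      refine ⟨x, hx, γ, SN.tri y γ₀ n, ?_, ?_⟩
      · have := hB.2 g⁻¹ (g * h) y n γ₀ hy hn
        rwa [inv_mul_cancel_left] at this
      · show SN.tri (SN.tri x γ y) γ₀ n = SN.tri x γ (SN.tri y γ₀ n)
        exact SN.tri_assoc x γ y γ₀ n
    have : f eN ∈ SN.triSpan (B g) (B h) := hle2 h2
    have hfn : f eN = n := (heN n).2
    rwa [hfn] at this
end
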